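/- arXiv:1607.02878 — 4 statements merged into one kernel-verified Lean document; each statement's English description precedes it below -/
import Mathlib

section
/- Under the standing assumptions on f (in particular f(t,z) ≥ α|z|^p − r(t) with α > 0, p > 1, 0 ≤ r(t) ≤ C, and f lower semicontinuous in (t,z)), the function h_f : ℝ × ℝ^{N+1} → [0,+∞] is lower semicontinuous in (t,q). In particular, if (t_n, q_n) → (t,q) with q^t ≥ 0 and liminf h_f(t_n, q_n) = ℓ < +∞, then q^t = 0, q^x = 0, and h_f(t,q) = 0 ≤ ℓ. -/
/-!
Since `f ≥ -C`, one has `h_f(t, q) ≥ C q^t`, which gives lower semicontinuity at `q = 0`.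
Where `q^t < 0`, `h_f` is a positive continuous factor times `f` composed with a continuous
map; where `q^t > 0`, `h_f = ⊤` nearby. At `q^t = 0 ≠ q^x`, the growth bound gives
`h_f(t', q') ≥ α |q'^x|^p s^(1-p) - C s` with `s = -q'^t`, and this tends to `+∞` as `s → 0+`
because `p > 1`. Finally, `h_f(t, q) < ⊤` together with `q^t ≥ 0` forces `q = 0`.
-/

open scoped BigOperators

/-- Partial Fenchel conjugate of `f` in the `z` variable:
`f*_z(t, z*) = sup_z (z · z* − f(t,z))`. -/
noncomputable def fenchelZ {N : ℕ} (f : ℝ → (Fin N → ℝ) → EReal) (t : ℝ)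
    (zs : Fin N → ℝ) : EReal :=
  ⨆ z : Fin N → ℝ, (((∑ i, z i * zs i : ℝ) : EReal) - f t z)

/-- The convex set `K(t) = {(q^x, q^t) : q^t ≥ f*_z(t, q^x)}`. -/
def Kset {N : ℕ} (f : ℝ → (Fin N → ℝ) → EReal) (t : ℝ) :
    Set ((Fin N → ℝ) × ℝ) :=
  {q | fenchelZ f t q.1 ≤ (q.2 : EReal)}

/-- The one-homogeneous integrand `h_f`. -/
noncomputable def hf {N : ℕ} (f : ℝ → (Fin N → ℝ) → EReal) (t : ℝ)
    (q : (Fin N → ℝ) × ℝ) : EReal :=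
  if q.2 < 0 then ((-q.2 : ℝ) : EReal) * f t (fun i => -q.1 i / q.2)
  else if q.2 = 0 ∧ q.1 = 0 then 0
  else ⊤

/-- Euclidean norm on `Fin N → ℝ`. -/
noncomputable def eucNorm {N : ℕ} (z : Fin N → ℝ) : ℝ :=
  Real.sqrt (∑ i, z i ^ 2)

open Filter Topology

section Semicontinuity

variable {X γ : Type*} [TopologicalSpace X] {F G : X → γ} {x : X}

theorem LowerSemicontinuousAt.congr_of_eventuallyEq [Preorder γ] (h : LowerSemicontinuousAt F x)
    (hGF : G =ᶠ[𝓝 x] F) : LowerSemicontinuousAt G x := by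
  intro y hy
  rw [hGF.eq_of_nhds] at hy
  filter_upwards [h y hy, hGF] with x' hy' hx'
  rwa [hx']

theorem LowerSemicontinuousAt.of_tendsto_top [LinearOrder γ] [OrderTop γ] [TopologicalSpace γ]
    [OrderTopology γ] (h : Tendsto F (𝓝 x) (𝓝 ⊤)) : LowerSemicontinuousAt F x :=
  fun _ hy => h.eventually (Ioi_mem_nhds (hy.trans_le le_top))

theorem LowerSemicontinuousAt.of_continuousAt_le [LinearOrder γ] [TopologicalSpace γ]
    [OrderTopology γ] (hG : ContinuousAt G x) (hGF : G ≤ F) (hx : F x = G x) :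
    LowerSemicontinuousAt F x := by
  intro y hy
  rw [hx] at hy
  filter_upwards [hG.eventually_const_lt hy] with x' hx' using hx'.trans_le (hGF x')

theorem LowerSemicontinuousAt.coe_mul {g : X → ℝ} {F : X → EReal}
    (hF : LowerSemicontinuousAt F x) (hg : ContinuousAt g x) (hgx : 0 < g x) :
    LowerSemicontinuousAt (fun x' => (g x' : EReal) * F x') x := by
  intro y hy
  have hgx' : (0 : EReal) < g x := EReal.coe_pos.2 hgx
  obtain ⟨w, hyw, hwF⟩ := EReal.lt_iff_exists_real_btwn.1
    ((EReal.div_lt_iff hgx' (EReal.coe_ne_top _)).2 (by rw [mul_comm]; exact hy))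
  have hy_lt : y < ((g x * w : ℝ) : EReal) := by
    rw [EReal.coe_mul, mul_comm]
    exact (EReal.div_lt_iff hgx' (EReal.coe_ne_top _)).1 hyw
  have hgw : ContinuousAt (fun x' => ((g x' * w : ℝ) : EReal)) x :=
    continuous_coe_real_ereal.continuousAt.comp (hg.mul continuousAt_const)
  filter_upwards [hF w hwF, hg.eventually_const_lt hgx, hgw.eventually_const_lt hy_lt]
    with x' hwF' hg' hy'
  rw [EReal.coe_mul] at hy'
  exact hy'.trans_le (mul_le_mul_of_nonneg_left hwF'.le (EReal.coe_nonneg.2 hg'.le))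

end Semicontinuity

section EucNorm

variable {N : ℕ}

theorem eucNorm_eq_norm (z : Fin N → ℝ) :
    eucNorm z = ‖(WithLp.toLp 2 z : EuclideanSpace ℝ (Fin N))‖ := by
  simp [eucNorm, EuclideanSpace.norm_eq]

theorem eucNorm_nonneg (z : Fin N → ℝ) : 0 ≤ eucNorm z :=
  Real.sqrt_nonneg _

theorem continuous_eucNorm : Continuous (eucNorm (N := N)) := by
  unfold eucNorm
  fun_prop

theorem eucNorm_pos {z : Fin N → ℝ} (hz : z ≠ 0) : 0 < eucNorm z := by
  rw [eucNorm_eq_norm, norm_pos_iff]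
  exact fun h => hz (WithLp.toLp_injective 2 (h.trans (WithLp.toLp_zero 2).symm))

theorem eucNorm_div (z : Fin N → ℝ) {s : ℝ} (hs : 0 < s) :
    eucNorm (fun i => z i / s) = eucNorm z / s := by
  simp only [eucNorm, div_pow, ← Finset.sum_div]
  rw [Real.sqrt_div' _ (sq_nonneg s), Real.sqrt_sq hs.le]

end EucNorm

section Hf

variable {N : ℕ} (f : ℝ → (Fin N → ℝ) → EReal) {t : ℝ} {q : (Fin N → ℝ) × ℝ}

theorem hf_of_neg (hq : q.2 < 0) :
    hf f t q = ((-q.2 : ℝ) : EReal) * f t (fun i => -q.1 i / q.2) := by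
  simp [hf, hq]

theorem hf_of_pos (hq : 0 < q.2) : hf f t q = ⊤ := by
  simp [hf, hq.not_gt, hq.ne']

theorem hf_zero : hf f t (0, 0) = 0 := by
  simp [hf]

theorem eq_zero_of_hf_ne_top (hq : 0 ≤ q.2) (h : hf f t q ≠ ⊤) : q.2 = 0 ∧ q.1 = 0 := by
  by_contra hq0
  exact h (by rw [hf, if_neg hq.not_gt, if_neg hq0])

theorem coe_mul_le_hf {C : ℝ} (hbelow : ∀ t z, ((-C : ℝ) : EReal) ≤ f t z) :
    ((C * q.2 : ℝ) : EReal) ≤ hf f t q := by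
  rcases lt_or_ge q.2 0 with hq | hq
  · rw [hf_of_neg f hq, show C * q.2 = -q.2 * -C by ring, EReal.coe_mul]
    exact mul_le_mul_of_nonneg_left (hbelow _ _) (EReal.coe_nonneg.2 (neg_nonneg.2 hq.le))
  · by_cases htop : hf f t q = ⊤
    · exact htop ▸ le_top
    · obtain ⟨h2, h1⟩ := eq_zero_of_hf_ne_top f hq htop
      rw [show q = (0, 0) from Prod.ext h1 h2, hf_zero]
      simp

theorem coe_le_hf_of_neg {α p C : ℝ}
    (hgrowth : ∀ t z, ((α * eucNorm z ^ p - C : ℝ) : EReal) ≤ f t z) (hq : q.2 < 0) :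
    ((α * eucNorm q.1 ^ p * (-q.2) ^ (1 - p) - C * -q.2 : ℝ) : EReal) ≤ hf f t q := by
  set s := -q.2 with hs_def
  have hs : 0 < s := neg_pos.2 hq
  have hz : (fun i => -q.1 i / q.2) = fun i => q.1 i / s := by
    ext i
    rw [hs_def, div_neg, neg_div]
  have hscale : α * eucNorm q.1 ^ p * s ^ (1 - p) - C * s
      = s * (α * eucNorm (fun i => q.1 i / s) ^ p - C) := by
    rw [eucNorm_div _ hs, Real.div_rpow (eucNorm_nonneg q.1) hs.le, Real.rpow_sub hs,
      Real.rpow_one]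
    field_simp
  rw [hf_of_neg f hq, hz, hscale, EReal.coe_mul]
  exact mul_le_mul_of_nonneg_left (hgrowth _ _) (EReal.coe_nonneg.2 hs.le)

end Hf

theorem tendsto_mul_rpow_sub_mul_nhdsGT_zero {a p : ℝ} (ha : 0 < a) (hp : 1 < p) (C : ℝ) :
    Tendsto (fun s : ℝ => a * s ^ (1 - p) - C * s) (𝓝[>] 0) atTop := by
  have hlin : Tendsto (fun s : ℝ => C * s) (𝓝[>] 0) (𝓝 0) := by
    simpa using (continuous_const_mul C).continuousWithinAt.tendsto (s := Set.Ioi 0) (x := 0)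
  simpa only [sub_eq_add_neg] using
    ((tendsto_rpow_neg_nhdsGT_zero (by linarith)).const_mul_atTop ha).atTop_add hlin.neg

section HfSemicontinuity

variable {N : ℕ} (f : ℝ → (Fin N → ℝ) → EReal)

theorem lowerSemicontinuousAt_hf_of_neg
    (hlsc : LowerSemicontinuous (fun q : ℝ × (Fin N → ℝ) => f q.1 q.2))
    {x : ℝ × ((Fin N → ℝ) × ℝ)} (hx : x.2.2 < 0) :
    LowerSemicontinuousAt (fun x => hf f x.1 x.2) x := by
  have hdiv : ContinuousAt (fun x : ℝ × ((Fin N → ℝ) × ℝ) =>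
      (x.1, fun i => -x.2.1 i / x.2.2)) x := by
    refine continuousAt_fst.prodMk (continuousAt_pi.2 fun i => ?_)
    exact ContinuousAt.div (by fun_prop) (by fun_prop) hx.ne
  have hprod := LowerSemicontinuousAt.coe_mul (g := fun x => -x.2.2)
    (LowerSemicontinuousAt.comp (hlsc _) hdiv) (by fun_prop) (neg_pos.2 hx)
  refine hprod.congr_of_eventuallyEq ?_
  filter_upwards [continuousAt_snd.snd.eventually_lt_const hx] with x' hx'
  exact hf_of_neg f hx'

theorem lowerSemicontinuousAt_hf_of_pos {x : ℝ × ((Fin N → ℝ) × ℝ)} (hx : 0 < x.2.2) :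
    LowerSemicontinuousAt (fun x => hf f x.1 x.2) x := by
  refine LowerSemicontinuousAt.of_tendsto_top (tendsto_const_nhds.congr' ?_)
  filter_upwards [continuousAt_snd.snd.eventually_const_lt hx] with x' hx'
  exact (hf_of_pos f hx').symm

theorem lowerSemicontinuousAt_hf_zero {C : ℝ} (hbelow : ∀ t z, ((-C : ℝ) : EReal) ≤ f t z)
    (t : ℝ) : LowerSemicontinuousAt (fun x => hf f x.1 x.2) (t, (0, 0)) :=
  LowerSemicontinuousAt.of_continuousAt_le (G := fun x => ((C * x.2.2 : ℝ) : EReal))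
    (continuous_coe_real_ereal.comp (by fun_prop)).continuousAt (fun x => coe_mul_le_hf f hbelow)
    (by simp [hf_zero])

theorem tendsto_hf_top {α p C : ℝ} (hα : 0 < α) (hp : 1 < p)
    (hgrowth : ∀ t z, ((α * eucNorm z ^ p - C : ℝ) : EReal) ≤ f t z)
    (t : ℝ) {qx : Fin N → ℝ} (hqx : qx ≠ 0) :
    Tendsto (fun x => hf f x.1 x.2) (𝓝 (t, (qx, 0))) (𝓝 ⊤) := by
  set δ := eucNorm qx / 2
  have hδ : 0 < δ := half_pos (eucNorm_pos hqx)
  rw [EReal.tendsto_nhds_top_iff_real]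
  intro y
  have hsmall := (tendsto_mul_rpow_sub_mul_nhdsGT_zero (mul_pos hα (Real.rpow_pos_of_pos hδ p))
    hp C).eventually_gt_atTop y
  rw [eventually_nhdsWithin_iff] at hsmall
  have hneg : Tendsto (fun x : ℝ × ((Fin N → ℝ) × ℝ) => -x.2.2) (𝓝 (t, (qx, 0))) (𝓝 0) :=
    continuous_snd.snd.neg.tendsto' _ _ neg_zero
  have hnorm : ∀ᶠ x : ℝ × ((Fin N → ℝ) × ℝ) in 𝓝 (t, (qx, 0)), δ < eucNorm x.2.1 :=
    (continuous_eucNorm.comp continuous_snd.fst).continuousAt.eventually_const_lt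
      (half_lt_self (eucNorm_pos hqx))
  filter_upwards [hneg.eventually hsmall, hnorm] with x hx hδx
  rcases lt_or_ge x.2.2 0 with hx2 | hx2
  · refine lt_of_lt_of_le (EReal.coe_lt_coe_iff.2 ?_) (coe_le_hf_of_neg f hgrowth hx2)
    refine (hx (neg_pos.2 hx2)).trans_le (sub_le_sub_right ?_ _)
    gcongr
    exact (Real.rpow_pos_of_pos (neg_pos.2 hx2) _).le
  · have hx1 : x.2.1 ≠ 0 := by
      rintro h
      simp [h, eucNorm] at hδx
      linarith
    rw [show hf f x.1 x.2 = ⊤ from by_contra fun h => hx1 (eq_zero_of_hf_ne_top f hx2 h).2]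
    exact EReal.coe_lt_top y

end HfSemicontinuity

open Filter in
theorem stmt1_general {N : ℕ} (f : ℝ → (Fin N → ℝ) → EReal) (α p C : ℝ)
    (hα : 0 < α) (hp : 1 < p) (r : ℝ → ℝ)
    (hr : ∀ t, 0 ≤ r t ∧ r t ≤ C)
    (hlsc : LowerSemicontinuous (fun q : ℝ × (Fin N → ℝ) => f q.1 q.2))
    (hgrowth : ∀ (t : ℝ) (z : Fin N → ℝ),
      ((α * eucNorm z ^ p - r t : ℝ) : EReal) ≤ f t z) :
    LowerSemicontinuous (fun q : ℝ × ((Fin N → ℝ) × ℝ) => hf f q.1 q.2) ∧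
    (∀ (tn : ℕ → ℝ) (qn : ℕ → (Fin N → ℝ) × ℝ) (t : ℝ) (q : (Fin N → ℝ) × ℝ)
        (l : EReal),
      Tendsto (fun n => (tn n, qn n)) atTop (nhds (t, q)) → 0 ≤ q.2 →
      liminf (fun n => hf f (tn n) (qn n)) atTop = l → l ≠ ⊤ →
      q.2 = 0 ∧ q.1 = 0 ∧ hf f t q = 0 ∧ (0 : EReal) ≤ l) := by
  have hgrowthC : ∀ t z, ((α * eucNorm z ^ p - C : ℝ) : EReal) ≤ f t z := fun t z =>
    (EReal.coe_le_coe_iff.2 (by linarith [(hr t).2])).trans (hgrowth t z)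
  have hbelow : ∀ t z, ((-C : ℝ) : EReal) ≤ f t z := fun t z =>
    (EReal.coe_le_coe_iff.2 (by nlinarith [Real.rpow_nonneg (eucNorm_nonneg z) p])).trans
      (hgrowthC t z)
  have hL : LowerSemicontinuous (fun q : ℝ × ((Fin N → ℝ) × ℝ) => hf f q.1 q.2) := by
    rintro ⟨t, qx, qt⟩
    rcases lt_trichotomy qt 0 with hqt | rfl | hqt
    · exact lowerSemicontinuousAt_hf_of_neg f hlsc hqt
    · obtain rfl | hqx := eq_or_ne qx 0
      · exact lowerSemicontinuousAt_hf_zero f hbelow t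
      · exact LowerSemicontinuousAt.of_tendsto_top (tendsto_hf_top f hα hp hgrowthC t hqx)
    · exact lowerSemicontinuousAt_hf_of_pos f hqt
  refine ⟨hL, fun tn qn t q l htend hq hlim hl => ?_⟩
  have hle : hf f t q ≤ l :=
    hlim ▸ (LowerSemicontinuousAt.le_liminf (hL (t, q))).trans htend.liminf_le_liminf_comp
  obtain ⟨hq2, hq1⟩ := eq_zero_of_hf_ne_top f hq (ne_top_of_le_ne_top hl hle)
  have hzero : hf f t q = 0 := by rw [show q = (0, 0) from Prod.ext hq1 hq2, hf_zero]
  exact ⟨hq2, hq1, hzero, hzero ▸ hle⟩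

open Filter in
/-- Under the standing assumptions, `h_f` is lower semicontinuous in `(t,q)`;
in particular along sequences with `q^t ≥ 0` and finite liminf one gets
`q^t = 0`, `q^x = 0` and `h_f(t,q) = 0 ≤ ℓ`. -/
theorem stmt1 {N : ℕ} (f : ℝ → (Fin N → ℝ) → EReal) (α p C : ℝ)
    (hα : 0 < α) (hp : 1 < p) (r : ℝ → ℝ)
    (hr : ∀ t, 0 ≤ r t ∧ r t ≤ C)
    (hconv : ∀ (t : ℝ) (z₁ z₂ : Fin N → ℝ) (a b : ℝ), 0 ≤ a → 0 ≤ b → a + b = 1 →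
      f t (a • z₁ + b • z₂) ≤ (a : EReal) * f t z₁ + (b : EReal) * f t z₂)
    (hlsc : LowerSemicontinuous (fun q : ℝ × (Fin N → ℝ) => f q.1 q.2))
    (hgrowth : ∀ (t : ℝ) (z : Fin N → ℝ),
      ((α * eucNorm z ^ p - r t : ℝ) : EReal) ≤ f t z) :
    LowerSemicontinuous (fun q : ℝ × ((Fin N → ℝ) × ℝ) => hf f q.1 q.2) ∧
    (∀ (tn : ℕ → ℝ) (qn : ℕ → (Fin N → ℝ) × ℝ) (t : ℝ) (q : (Fin N → ℝ) × ℝ)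
        (l : EReal),
      Tendsto (fun n => (tn n, qn n)) atTop (nhds (t, q)) → 0 ≤ q.2 →
      liminf (fun n => hf f (tn n) (qn n)) atTop = l → l ≠ ⊤ →
      q.2 = 0 ∧ q.1 = 0 ∧ hf f t q = 0 ∧ (0 : EReal) ≤ l) :=
  stmt1_general f α p C hα hp r hr hlsc hgrowth
end

section
/- Let u ∈ L^1_loc(A), w ∈ L^∞_c(A) with zero mean on A, α ∈ C^∞(ℝ;[0,1]) and β(t) := ∫_0^t α(s) ds. Then ∫_{−∞}^{+∞} α(t) j_w(t) dt = ∫_A (β∘u)(x) w(x) dx, where j_w(t) = ∫_A χ_{{u>t}} w dx. -/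
open MeasureTheory Set

/-- The "layer" function: `gfun v t = χ_{0 ≤ t < v} - χ_{v ≤ t < 0}`. -/
private noncomputable def gfun (v t : ℝ) : ℝ :=
  (if 0 ≤ t ∧ t < v then (1:ℝ) else 0) - (if v ≤ t ∧ t < 0 then (1:ℝ) else 0)

private lemma gfun_abs_le_one (v t : ℝ) : |gfun v t| ≤ 1 := by
  unfold gfun; split_ifs <;> norm_num

private lemma stmt9_aux {d : ℕ} (A : Set (Fin d → ℝ)) (hA : IsOpen A)
    (u w : (Fin d → ℝ) → ℝ)
    (hum : Measurable u)
    (hw : Measurable w) (C : ℝ) (hC : ∀ x, |w x| ≤ C)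
    (K : Set (Fin d → ℝ)) (hKc : IsCompact K) (hKA : K ⊆ A) (hKw : ∀ x ∉ K, w x = 0)
    (hui : IntegrableOn u K volume)
    (hwmean : ∫ x in A, w x = 0)
    (α : ℝ → ℝ) (hαc : Continuous α) (hα01 : ∀ t, α t ∈ Set.Icc (0:ℝ) 1) :
    ∫ t : ℝ, α t * ∫ x in A ∩ {x | t < u x}, w x =
      ∫ x in A, (∫ s in (0:ℝ)..(u x), α s) * w x := by
  have hKm : MeasurableSet K := hKc.measurableSet
  have hAm : MeasurableSet A := hA.measurableSet
  -- w is integrable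
  have hwInt : Integrable w volume := by
    refine Integrable.mono' (g := K.indicator fun _ => C)
      ((integrable_indicator_iff hKm).2 ?_) hw.aestronglyMeasurable ?_
    · exact integrableOn_const hKc.measure_lt_top.ne
    · refine Filter.Eventually.of_forall fun x => ?_
      by_cases hx : x ∈ K
      · simpa [Set.indicator_of_mem hx] using hC x
      · simp [Set.indicator_of_notMem hx, hKw x hx]
  have hwA : IntegrableOn w A volume := hwInt.integrableOn
  have hwsub : ∀ s : Set (Fin d → ℝ), IntegrableOn w (A ∩ s) volume :=
    fun s => hwA.mono_set inter_subset_left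
  -- key A : the inner t-integral computes the interval integral
  have hIcoInt : ∀ a b : ℝ, IntegrableOn α (Ico a b) volume :=
    fun a b => (hαc.integrableOn_Icc).mono_set Ico_subset_Icc_self
  have keyA : ∀ x, (∫ t : ℝ, α t * gfun (u x) t) = ∫ s in (0:ℝ)..(u x), α s := by
    intro x
    have h1 : (fun t => α t * gfun (u x) t)
        = fun t => (Ico (0:ℝ) (u x)).indicator α t - (Ico (u x) (0:ℝ)).indicator α t := by
      funext t
      simp only [gfun, indicator, mem_Ico]
      by_cases h1 : 0 ≤ t ∧ t < u x <;> by_cases h2 : u x ≤ t ∧ t < 0 <;>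
        simp [h1, h2]
    rw [h1, integral_sub ((integrable_indicator_iff measurableSet_Ico).2 (hIcoInt _ _))
      ((integrable_indicator_iff measurableSet_Ico).2 (hIcoInt _ _)),
      integral_indicator measurableSet_Ico, integral_indicator measurableSet_Ico]
    rcases le_or_gt 0 (u x) with h | h
    · rw [Ico_eq_empty (not_lt.2 h), Measure.restrict_empty, integral_zero_measure, sub_zero,
        Measure.restrict_congr_set Ico_ae_eq_Ioc]
      exact (intervalIntegral.integral_of_le h).symm
    · rw [Ico_eq_empty (not_lt.2 h.le), Measure.restrict_empty, integral_zero_measure, zero_sub,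
        Measure.restrict_congr_set Ico_ae_eq_Ioc]
      exact (intervalIntegral.integral_of_ge h.le).symm
  -- key B : the inner x-integral equals the superlevel-set integral
  have keyB : ∀ t : ℝ, (∫ x in A, gfun (u x) t * w x) = ∫ x in A ∩ {x | t < u x}, w x := by
    intro t
    rcases le_or_gt 0 t with ht | ht
    · have hg : ∀ x, gfun (u x) t * w x = ({x | t < u x}).indicator w x := by
        intro x
        have h2 : ¬(u x ≤ t ∧ t < 0) := fun h => absurd ht (not_le.2 h.2)
        by_cases h1 : t < u x
        · simp [gfun, indicator, h1, h2, ht, mem_setOf_eq]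
        · simp [gfun, indicator, h1, h2, mem_setOf_eq]
      have hms : MeasurableSet {x | t < u x} := hum measurableSet_Ioi
      rw [integral_congr_ae (Filter.Eventually.of_forall hg),
        integral_indicator hms, Measure.restrict_restrict hms, Set.inter_comm]
    · have hg : ∀ x, gfun (u x) t * w x = -({x | u x ≤ t}).indicator w x := by
        intro x
        have h1 : ¬(0 ≤ t ∧ t < u x) := fun h => absurd ht (not_lt.2 h.1)
        by_cases h2 : u x ≤ t
        · simp [gfun, indicator, h1, h2, ht, mem_setOf_eq]
        · simp [gfun, indicator, h1, h2, mem_setOf_eq]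
      have e1 : (∫ x in A, gfun (u x) t * w x) = -∫ x in A ∩ {x | u x ≤ t}, w x := by
        have hms : MeasurableSet {x | u x ≤ t} := hum measurableSet_Iic
        rw [integral_congr_ae (Filter.Eventually.of_forall hg), integral_neg,
          integral_indicator hms, Measure.restrict_restrict hms, Set.inter_comm]
      have hdisj : Disjoint (A ∩ {x | t < u x}) (A ∩ {x | u x ≤ t}) := by
        refine Set.disjoint_left.2 fun x hx hx' => ?_
        have h1 : t < u x := hx.2
        have h2 : u x ≤ t := hx'.2
        exact absurd h2 (not_le.2 h1)
      have hunion : A ∩ {x | t < u x} ∪ A ∩ {x | u x ≤ t} = A := by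
        ext x
        simp only [Set.mem_union, Set.mem_inter_iff, mem_setOf_eq]
        constructor
        · rintro (h | h) <;> exact h.1
        · intro hx
          rcases lt_or_ge t (u x) with h | h
          · exact Or.inl ⟨hx, h⟩
          · exact Or.inr ⟨hx, h⟩
      have hsplit : (∫ x in A ∩ {x | t < u x}, w x) + ∫ x in A ∩ {x | u x ≤ t}, w x = 0 := by
        rw [← setIntegral_union hdisj (hAm.inter (show MeasurableSet {x | u x ≤ t} from hum measurableSet_Iic)) (hwsub _) (hwsub _),
          hunion]
        exact hwmean
      rw [e1]; linarith
  -- bound on α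
  have hα1 : ∀ t, |α t| ≤ 1 := fun t => abs_le.2 ⟨by linarith [(hα01 t).1], (hα01 t).2⟩
  -- Fubini
  have hSp : MeasurableSet {p : (Fin d → ℝ) × ℝ | 0 ≤ p.2 ∧ p.2 < u p.1} :=
    (measurableSet_le measurable_const measurable_snd).inter
      (measurableSet_lt measurable_snd (hum.comp measurable_fst))
  have hSm : MeasurableSet {p : (Fin d → ℝ) × ℝ | u p.1 ≤ p.2 ∧ p.2 < 0} :=
    (measurableSet_le (hum.comp measurable_fst) measurable_snd).inter
      (measurableSet_lt measurable_snd measurable_const)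
  have hgm : Measurable fun p : (Fin d → ℝ) × ℝ => gfun (u p.1) p.2 := by
    unfold gfun
    exact (Measurable.ite hSp measurable_const measurable_const).sub
      (Measurable.ite hSm measurable_const measurable_const)
  set F : (Fin d → ℝ) × ℝ → ℝ := fun p => α p.2 * (gfun (u p.1) p.2 * w p.1) with hF
  have hFm : AEStronglyMeasurable F (((volume : Measure (Fin d → ℝ)).restrict A).prod volume) :=
    ((hαc.measurable.comp measurable_snd).mul (hgm.mul (hw.comp measurable_fst))).aestronglyMeasurable
  set S : Set ((Fin d → ℝ) × ℝ) :=
    {p | p.1 ∈ K ∧ ((0 ≤ p.2 ∧ p.2 < u p.1) ∨ (u p.1 ≤ p.2 ∧ p.2 < 0))} with hS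
  have hSmeas : MeasurableSet S :=
    (measurable_fst hKm).inter (hSp.union hSm)
  have hSfin : (((volume : Measure (Fin d → ℝ)).restrict A).prod volume) S < ⊤ := by
    rw [Measure.prod_apply hSmeas]
    have hbound : ∀ x, volume (Prod.mk x ⁻¹' S)
        ≤ K.indicator (fun x => (‖u x‖₊ : ENNReal) + ‖u x‖₊) x := by
      intro x
      by_cases hx : x ∈ K
      · have hsub : Prod.mk x ⁻¹' S ⊆ Ico 0 (u x) ∪ Ico (u x) 0 := by
          intro t ht
          rcases ht.2 with h | h
          · exact Or.inl ⟨h.1, h.2⟩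
          · exact Or.inr ⟨h.1, h.2⟩
        calc volume (Prod.mk x ⁻¹' S) ≤ volume (Ico 0 (u x)) + volume (Ico (u x) 0) :=
              le_trans (measure_mono hsub) (measure_union_le _ _)
          _ ≤ K.indicator (fun x => (‖u x‖₊ : ENNReal) + ‖u x‖₊) x := by
              rw [Set.indicator_of_mem hx, Real.volume_Ico, Real.volume_Ico]
              have h1 : ENNReal.ofReal (u x - 0) ≤ (‖u x‖₊ : ENNReal) := by
                rw [← enorm_eq_nnnorm, Real.enorm_eq_ofReal_abs]
                exact ENNReal.ofReal_le_ofReal (by simp [le_abs_self])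
              have h2 : ENNReal.ofReal (0 - u x) ≤ (‖u x‖₊ : ENNReal) := by
                rw [← enorm_eq_nnnorm, Real.enorm_eq_ofReal_abs]
                exact ENNReal.ofReal_le_ofReal (by simp [neg_le_abs])
              exact add_le_add h1 h2
      · have hempty : Prod.mk x ⁻¹' S = ∅ := by
          ext t; simp [hS, hx]
        simp [hempty, Set.indicator_of_notMem hx]
    calc (∫⁻ x, volume (Prod.mk x ⁻¹' S) ∂((volume : Measure (Fin d → ℝ)).restrict A))
        ≤ ∫⁻ x, K.indicator (fun x => (‖u x‖₊ : ENNReal) + ‖u x‖₊) x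
            ∂((volume : Measure (Fin d → ℝ)).restrict A) := lintegral_mono hbound
      _ = ∫⁻ x in K, ((‖u x‖₊ : ENNReal) + ‖u x‖₊) ∂((volume : Measure (Fin d → ℝ)).restrict A) :=
          lintegral_indicator hKm _
      _ = ∫⁻ x in K, ((‖u x‖₊ : ENNReal) + ‖u x‖₊) ∂(volume : Measure (Fin d → ℝ)) := by
          rw [Measure.restrict_restrict hKm, Set.inter_eq_self_of_subset_left hKA]
      _ = (∫⁻ x in K, (‖u x‖₊ : ENNReal)) + ∫⁻ x in K, (‖u x‖₊ : ENNReal) :=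
          lintegral_add_left hum.nnnorm.coe_nnreal_ennreal _
      _ < ⊤ := ENNReal.add_lt_top.2 ⟨hui.2, hui.2⟩
  have hFint : Integrable F (((volume : Measure (Fin d → ℝ)).restrict A).prod volume) := by
    refine Integrable.mono' (g := S.indicator fun _ => C)
      ((integrable_indicator_iff hSmeas).2 ?_) hFm ?_
    · exact integrableOn_const hSfin.ne
    · refine Filter.Eventually.of_forall fun p => ?_
      by_cases hp : p ∈ S
      · rw [Set.indicator_of_mem hp]
        calc ‖F p‖ = |α p.2| * (|gfun (u p.1) p.2| * |w p.1|) := by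
              simp [hF, abs_mul]
          _ ≤ 1 * (1 * C) := by
              refine mul_le_mul (hα1 _) ?_ (by positivity) zero_le_one
              exact mul_le_mul (gfun_abs_le_one _ _) (hC _) (abs_nonneg _) zero_le_one
          _ = C := by ring
      · rw [Set.indicator_of_notMem hp]
        have hp' := hp
        simp only [hS, mem_setOf_eq, not_and_or] at hp'
        rcases hp' with h | h
        · simp [hF, hKw _ h]
        · have hg0 : gfun (u p.1) p.2 = 0 := by
            push_neg at h
            unfold gfun
            rw [if_neg, if_neg, sub_zero]
            · intro hc; exact absurd hc.2 (not_lt.2 (h.2 hc.1))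
            · intro hc; exact absurd hc.2 (not_lt.2 (h.1 hc.1))
          simp [hF, hg0]
  have swap := integral_integral_swap (μ := (volume : Measure (Fin d → ℝ)).restrict A)
    (ν := (volume : Measure ℝ)) (f := fun x t => α t * (gfun (u x) t * w x)) hFint
  calc ∫ t : ℝ, α t * ∫ x in A ∩ {x | t < u x}, w x
      = ∫ t : ℝ, ∫ x in A, α t * (gfun (u x) t * w x) := by
        refine integral_congr_ae (Filter.Eventually.of_forall fun t => ?_)
        show α t * (∫ x in A ∩ {x | t < u x}, w x) = ∫ x in A, α t * (gfun (u x) t * w x)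
        rw [integral_const_mul, keyB t]
    _ = ∫ x in A, ∫ t : ℝ, α t * (gfun (u x) t * w x) := swap.symm
    _ = ∫ x in A, (∫ s in (0:ℝ)..(u x), α s) * w x := by
        refine integral_congr_ae (Filter.Eventually.of_forall fun x => ?_)
        show (∫ t : ℝ, α t * (gfun (u x) t * w x)) = (∫ s in (0:ℝ)..(u x), α s) * w x
        simp_rw [← mul_assoc]
        rw [integral_mul_const, keyA x]

/-- For `u ∈ L¹_loc(A)`, `w ∈ L^∞_c(A)` with zero mean, `α ∈ C^∞(ℝ;[0,1])` and
`β(t) = ∫_0^t α(s) ds`, one has `∫_ℝ α(t) j_w(t) dt = ∫_A (β∘u) w dx`. -/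
theorem stmt9 {d : ℕ} (A : Set (Fin d → ℝ)) (hA : IsOpen A)
    (hAbd : Bornology.IsBounded A)
    (u w : (Fin d → ℝ) → ℝ)
    (hu : LocallyIntegrableOn u A volume)
    (hw : Measurable w) (hwbd : ∃ C : ℝ, ∀ x, |w x| ≤ C)
    (hwsupp : ∃ K : Set (Fin d → ℝ), IsCompact K ∧ K ⊆ A ∧ ∀ x ∉ K, w x = 0)
    (hwmean : ∫ x in A, w x = 0)
    (α : ℝ → ℝ) (hα : ContDiff ℝ (⊤ : ℕ∞) α) (hα01 : ∀ t, α t ∈ Set.Icc (0:ℝ) 1) :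
    ∫ t : ℝ, α t * ∫ x in A ∩ {x | t < u x}, w x =
      ∫ x in A, (∫ s in (0:ℝ)..(u x), α s) * w x := by
  obtain ⟨C, hC⟩ := hwbd
  obtain ⟨K, hKc, hKA, hKw⟩ := hwsupp
  have hAm : MeasurableSet A := hA.measurableSet
  have huae : AEStronglyMeasurable u ((volume : Measure (Fin d → ℝ)).restrict A) :=
    hu.aestronglyMeasurable
  set u' : (Fin d → ℝ) → ℝ := huae.mk u with hu'def
  have hu'm : Measurable u' := huae.stronglyMeasurable_mk.measurable
  have hequ : u =ᵐ[(volume : Measure (Fin d → ℝ)).restrict A] u' := huae.ae_eq_mk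
  have hae : ∀ᵐ x ∂(volume : Measure (Fin d → ℝ)), x ∈ A → u x = u' x :=
    (ae_restrict_iff' hAm).1 hequ
  have huK : IntegrableOn u K volume := hu.integrableOn_compact_subset hKA hKc
  have hu'K : IntegrableOn u' K volume :=
    huK.congr (hequ.filter_mono (ae_mono (Measure.restrict_mono hKA le_rfl)))
  have hN : volume {x | x ∈ A ∧ ¬ u x = u' x} = 0 := by
    have h := ae_iff.1 hae
    simpa [Classical.not_imp] using h
  have hseq : ∀ t : ℝ, (A ∩ {x | t < u x} : Set _) =ᵐ[(volume : Measure (Fin d → ℝ))]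
      (A ∩ {x | t < u' x} : Set _) := by
    intro t
    rw [MeasureTheory.ae_eq_set]
    constructor
    · refine measure_mono_null ?_ hN
      rintro x ⟨⟨hxA, hxu⟩, hxn⟩
      refine ⟨hxA, fun h => hxn ⟨hxA, show t < u' x from ?_⟩⟩
      rw [← h]; exact hxu
    · refine measure_mono_null ?_ hN
      rintro x ⟨⟨hxA, hxu⟩, hxn⟩
      refine ⟨hxA, fun h => hxn ⟨hxA, show t < u x from ?_⟩⟩
      rw [h]; exact hxu
  have hL : (∫ t : ℝ, α t * ∫ x in A ∩ {x | t < u x}, w x)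
      = ∫ t : ℝ, α t * ∫ x in A ∩ {x | t < u' x}, w x := by
    refine integral_congr_ae (Filter.Eventually.of_forall fun t => ?_)
    show α t * (∫ x in A ∩ {x | t < u x}, w x) = α t * ∫ x in A ∩ {x | t < u' x}, w x
    rw [Measure.restrict_congr_set (hseq t)]
  have hR : (∫ x in A, (∫ s in (0:ℝ)..(u x), α s) * w x)
      = ∫ x in A, (∫ s in (0:ℝ)..(u' x), α s) * w x := by
    refine integral_congr_ae (hequ.mono fun x hx => ?_)
    show (∫ s in (0:ℝ)..(u x), α s) * w x = (∫ s in (0:ℝ)..(u' x), α s) * w x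
    rw [hx]
  rw [hL, hR]
  exact stmt9_aux A hA u' w hu'm hw C hC K hKc hKA hKw hu'K hwmean α hα.continuous hα01
end

section
/- (1D free boundary problem, explicit value.) For a, λ > 0, the infimum I(a,λ) := inf{ ∫_0^a (|u'|^2/2 + λ·χ_{{u≠0}}) dt : u ∈ W^{1,2}(0,a), u(0) = u(a) = 1 } equals min{ λa, 2√(2λ) }. -/
/-! If `u` never vanishes on `(0, a)` its cost is at least `λa`. Otherwise let `s ≤ t` be its first
and last zeros: `u` falls by `1` on `(0, s)` and rises by `1` on `(t, a)`, and on any interval `I`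
with `|∫_I u'| ≥ 1` integrating the AM-GM inequality `√(2λ) |u'| ≤ |u'|²/2 + λ` gives
`∫_I |u'|²/2 + λ|I| ≥ √(2λ)`; the two intervals together cost at least `2√(2λ)`. Both values are
attained: `λa` by `u ≡ 1` and, when `2√(2λ) ≤ λa`, `2√(2λ)` by the profile that falls linearly with
slope `√(2λ)` to `0`, stays there, and rises back to `1` at `a`. -/

open MeasureTheory

/-- Admissible class for the 1D free boundary problem: `u ∈ W^{1,2}(0,a)`
(represented by its continuous representative, primitive of `g ∈ L²`),
with boundary values `u(0) = u(a) = 1`. -/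
def Adm1D (a : ℝ) (u g : ℝ → ℝ) : Prop :=
  ContinuousOn u (Set.Icc 0 a) ∧
  MemLp g 2 (volume.restrict (Set.Ioo 0 a)) ∧
  (∀ x ∈ Set.Icc 0 a, u x = 1 + ∫ s in (0:ℝ)..x, g s) ∧
  u 0 = 1 ∧ u a = 1

/-- The cost `∫_0^a |u'|²/2 dt + λ |{u ≠ 0}|`. -/
noncomputable def cost1D (a l : ℝ) (u g : ℝ → ℝ) : ℝ :=
  (∫ s in Set.Ioo 0 a, g s ^ 2 / 2) +
    l * (volume {s | s ∈ Set.Ioo 0 a ∧ u s ≠ 0}).toReal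

/-- The value `I(a,λ)` of the 1D free boundary problem. -/
noncomputable def I1D (a l : ℝ) : ℝ :=
  sInf {c | ∃ u g, Adm1D a u g ∧ c = cost1D a l u g}

open Set

lemma mul_abs_integral_le_integral_sq_div_two_add {α : Type*} [MeasurableSpace α]
    {μ : Measure α} [IsFiniteMeasure μ] {g : α → ℝ} (hg : MemLp g 2 μ) {c : ℝ} (hc : 0 ≤ c) :
    c * |∫ x, g x ∂μ| ≤ (∫ x, g x ^ 2 / 2 ∂μ) + c ^ 2 / 2 * μ.real univ := by
  have hsq : Integrable (fun x => g x ^ 2 / 2) μ := hg.integrable_sq.div_const _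
  calc c * |∫ x, g x ∂μ| ≤ c * ∫ x, |g x| ∂μ :=
        mul_le_mul_of_nonneg_left (abs_integral_le_integral_abs) hc
    _ = ∫ x, c * |g x| ∂μ := (integral_const_mul _ _).symm
    _ ≤ ∫ x, (g x ^ 2 / 2 + c ^ 2 / 2) ∂μ := by
        refine integral_mono ((hg.integrable one_le_two).abs.const_mul c)
          (hsq.add (integrable_const _)) fun x => ?_
        nlinarith [sq_nonneg (|g x| - c), sq_abs (g x)]
    _ = (∫ x, g x ^ 2 / 2 ∂μ) + c ^ 2 / 2 * μ.real univ := by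
        rw [integral_add hsq (integrable_const _), integral_const, smul_eq_mul, mul_comm]

lemma sqrt_two_mul_le_integral_sq_div_two_add {α : Type*} [MeasurableSpace α]
    {μ : Measure α} [IsFiniteMeasure μ] {g : α → ℝ} (hg : MemLp g 2 μ) {l : ℝ} (hl : 0 ≤ l)
    (h : 1 ≤ |∫ x, g x ∂μ|) :
    √(2 * l) ≤ (∫ x, g x ^ 2 / 2 ∂μ) + l * μ.real univ := by
  have hc := mul_abs_integral_le_integral_sq_div_two_add hg (Real.sqrt_nonneg (2 * l))
  rw [Real.sq_sqrt (by positivity), mul_div_cancel_left₀ l two_ne_zero] at hc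
  exact (le_mul_of_one_le_right (Real.sqrt_nonneg _) h).trans hc

lemma ContinuousOn.exists_first_last_zero {u : ℝ → ℝ} {p q : ℝ} (hu : ContinuousOn u (Icc p q))
    (hp : u p ≠ 0) (hq : u q ≠ 0) {t₀ : ℝ} (ht₀ : t₀ ∈ Icc p q) (hz : u t₀ = 0) :
    ∃ s t, p < s ∧ s ≤ t ∧ t < q ∧ u s = 0 ∧ u t = 0 ∧
      Ioo p s ∪ Ioo t q ⊆ {x | x ∈ Ioo p q ∧ u x ≠ 0} := by
  set Z := Icc p q ∩ u ⁻¹' {0}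
  have hZ : IsClosed Z := hu.preimage_isClosed_of_isClosed isClosed_Icc isClosed_singleton
  have ht₀Z : t₀ ∈ Z := ⟨ht₀, hz⟩
  have hbdd : BddBelow Z := ⟨p, fun x hx => hx.1.1⟩
  have hbdd' : BddAbove Z := ⟨q, fun x hx => hx.1.2⟩
  obtain ⟨⟨hps, -⟩, hs⟩ : sInf Z ∈ Z := hZ.csInf_mem ⟨t₀, ht₀Z⟩ hbdd
  obtain ⟨⟨-, htq⟩, ht⟩ : sSup Z ∈ Z := hZ.csSup_mem ⟨t₀, ht₀Z⟩ hbdd'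
  have hst : sInf Z ≤ sSup Z := (csInf_le hbdd ht₀Z).trans (le_csSup hbdd' ht₀Z)
  refine ⟨sInf Z, sSup Z, hps.lt_of_ne ?_, hst, htq.lt_of_ne ?_, hs, ht, ?_⟩
  · intro h; exact hp (h ▸ hs)
  · intro h; exact hq (h ▸ ht)
  rintro x (⟨hpx, hxs⟩ | ⟨htx, hxq⟩)
  · have hxq : x < q := hxs.trans_le (hst.trans htq)
    exact ⟨⟨hpx, hxq⟩, fun hx => hxs.not_ge (csInf_le hbdd ⟨⟨hpx.le, hxq.le⟩, hx⟩)⟩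
  · have hpx : p < x := (hps.trans hst).trans_lt htx
    exact ⟨⟨hpx, hxq⟩, fun hx => htx.not_ge (le_csSup hbdd' ⟨⟨hpx.le, hxq.le⟩, hx⟩)⟩

lemma Adm1D.setIntegral_Ioo_eq_sub {a : ℝ} {u g : ℝ → ℝ} (h : Adm1D a u g) {p q : ℝ}
    (hp : 0 ≤ p) (hpq : p ≤ q) (hq : q ≤ a) : ∫ x in Ioo p q, g x = u q - u p := by
  obtain ⟨-, hg, hu, -⟩ := h
  have hint : ∀ x ∈ Icc 0 a, IntervalIntegrable g volume 0 x := fun x hx =>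
    (intervalIntegrable_iff_integrableOn_Ioo_of_le hx.1).2
      (IntegrableOn.mono_set (hg.integrable one_le_two) (Ioo_subset_Ioo_right hx.2))
  rw [← integral_Ioc_eq_integral_Ioo, ← intervalIntegral.integral_of_le hpq,
    ← intervalIntegral.integral_interval_sub_left (hint q ⟨hp.trans hpq, hq⟩)
      (hint p ⟨hp, hpq.trans hq⟩), hu q ⟨hp.trans hpq, hq⟩, hu p ⟨hp, hpq.trans hq⟩]
  ring

lemma setIntegral_add_measureReal_le_cost1D {a l : ℝ} {u g : ℝ → ℝ} (hl : 0 ≤ l)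
    (hg : MemLp g 2 (volume.restrict (Ioo 0 a))) {S : Set ℝ}
    (hS : S ⊆ {x | x ∈ Ioo 0 a ∧ u x ≠ 0}) :
    (∫ x in S, g x ^ 2 / 2) + l * volume.real S ≤ cost1D a l u g := by
  have hSa : S ⊆ Ioo 0 a := hS.trans fun x hx => hx.1
  have henergy : (∫ x in S, g x ^ 2 / 2) ≤ ∫ x in Ioo 0 a, g x ^ 2 / 2 :=
    setIntegral_mono_set (hg.integrable_sq.div_const _) (ae_of_all _ fun x => by positivity)
      hSa.eventuallyLE
  have hmeasure : volume.real S ≤ volume.real {x | x ∈ Ioo 0 a ∧ u x ≠ 0} :=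
    measureReal_mono hS (measure_ne_top_of_subset (fun x hx => hx.1) measure_Ioo_lt_top.ne)
  exact add_le_add henergy (mul_le_mul_of_nonneg_left hmeasure hl)

lemma mul_le_cost1D_of_forall_ne_zero {a l : ℝ} {u g : ℝ → ℝ} (hl : 0 ≤ l)
    (hg : MemLp g 2 (volume.restrict (Ioo 0 a))) (hu : ∀ x ∈ Ioo 0 a, u x ≠ 0) :
    l * a ≤ cost1D a l u g := by
  refine le_trans ?_ (setIntegral_add_measureReal_le_cost1D hl hg fun x hx => ⟨hx, hu x hx⟩)
  have henergy : 0 ≤ ∫ x in Ioo 0 a, g x ^ 2 / 2 := integral_nonneg fun x => by positivity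
  have hmeasure := mul_le_mul_of_nonneg_left (le_max_left a 0) hl
  rw [Real.volume_real_Ioo, sub_zero]
  linarith

lemma two_sqrt_le_cost1D_of_zero {a l : ℝ} {u g : ℝ → ℝ} (hl : 0 ≤ l) (h : Adm1D a u g)
    {t₀ : ℝ} (ht₀ : t₀ ∈ Ioo 0 a) (hz : u t₀ = 0) :
    2 * √(2 * l) ≤ cost1D a l u g := by
  obtain ⟨hcont, hg, -, hu0, hua⟩ := id h
  obtain ⟨s, t, hs, hst, hta, hus, hut, hsub⟩ := hcont.exists_first_last_zero
    (by rw [hu0]; exact one_ne_zero) (by rw [hua]; exact one_ne_zero) (Ioo_subset_Icc_self ht₀) hz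
  have hsub₁ : Ioo 0 s ⊆ Ioo 0 a := Ioo_subset_Ioo_right (hst.trans hta.le)
  have hsub₂ : Ioo t a ⊆ Ioo 0 a := Ioo_subset_Ioo_left (hs.le.trans hst)
  have hleft := sqrt_two_mul_le_integral_sq_div_two_add (hg.mono_measure
    (Measure.restrict_mono hsub₁ le_rfl)) hl (by
      rw [h.setIntegral_Ioo_eq_sub le_rfl hs.le (hst.trans hta.le), hus, hu0]; norm_num)
  have hright := sqrt_two_mul_le_integral_sq_div_two_add (hg.mono_measure
    (Measure.restrict_mono hsub₂ le_rfl)) hl (by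
      rw [h.setIntegral_Ioo_eq_sub (hs.le.trans hst) hta.le le_rfl, hut, hua]; norm_num)
  rw [measureReal_restrict_apply_univ] at hleft hright
  have hdisj : Disjoint (Ioo 0 s) (Ioo t a) :=
    (Ioc_disjoint_Ioc_of_le hst).mono Ioo_subset_Ioc_self Ioo_subset_Ioc_self
  have hsq : IntegrableOn (fun x => g x ^ 2 / 2) (Ioo 0 a) := hg.integrable_sq.div_const 2
  have hcost := setIntegral_add_measureReal_le_cost1D hl hg hsub
  rw [setIntegral_union hdisj measurableSet_Ioo (hsq.mono_set hsub₁) (hsq.mono_set hsub₂),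
    measureReal_union hdisj measurableSet_Ioo measure_Ioo_lt_top.ne measure_Ioo_lt_top.ne] at hcost
  linarith

lemma min_le_cost1D {a l : ℝ} {u g : ℝ → ℝ} (hl : 0 ≤ l) (h : Adm1D a u g) :
    min (l * a) (2 * √(2 * l)) ≤ cost1D a l u g := by
  by_cases hz : ∃ t ∈ Ioo 0 a, u t = 0
  · obtain ⟨t, ht, hut⟩ := hz
    exact (min_le_right _ _).trans (two_sqrt_le_cost1D_of_zero hl h ht hut)
  · push Not at hz
    exact (min_le_left _ _).trans (mul_le_cost1D_of_forall_ne_zero hl h.2.1 hz)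

lemma adm1D_primitive {a : ℝ} {g : ℝ → ℝ} (ha : 0 ≤ a)
    (hg : MemLp g 2 (volume.restrict (Ioo 0 a))) (h : ∫ x in 0..a, g x = 0) :
    Adm1D a (fun x => 1 + ∫ t in 0..x, g t) g := by
  have hint : IntegrableOn g (uIcc 0 a) := by
    rw [uIcc_of_le ha, integrableOn_Icc_iff_integrableOn_Ioo]
    exact hg.integrable one_le_two
  refine ⟨?_, hg, fun x _ => rfl, by simp, by simp [h]⟩
  have hprim := intervalIntegral.continuousOn_primitive_interval hint
  rw [uIcc_of_le ha] at hprim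
  exact continuousOn_const.add hprim

lemma intervalIntegral_indicator_const {S : Set ℝ} (hS : MeasurableSet S) (c : ℝ) {x : ℝ}
    (hx : 0 ≤ x) : ∫ t in 0..x, S.indicator (fun _ => c) t = volume.real (S ∩ Ioc 0 x) * c := by
  rw [intervalIntegral.integral_of_le hx, integral_indicator_const c hS,
    measureReal_restrict_apply hS, smul_eq_mul]

/-- The derivative of the profile that descends linearly from `1` to `0` on `[0, δ]`, vanishes on
`[δ, a - δ]` and climbs back linearly to `1` on `[a - δ, a]`. -/
noncomputable def rampSlope (a δ : ℝ) (x : ℝ) : ℝ :=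
  (Ioo 0 δ).indicator (fun _ => -δ⁻¹) x + (Ioo (a - δ) a).indicator (fun _ => δ⁻¹) x

section rampSlope

variable {a δ : ℝ}

lemma memLp_rampSlope (μ : Measure ℝ) [IsFiniteMeasure μ] : MemLp (rampSlope a δ) 2 μ :=
  ((memLp_const (-δ⁻¹)).indicator measurableSet_Ioo).add
    ((memLp_const δ⁻¹).indicator measurableSet_Ioo)

lemma intervalIntegral_rampSlope {x : ℝ} (hx : 0 ≤ x) :
    ∫ t in 0..x, rampSlope a δ t =
      δ⁻¹ * (volume.real (Ioo (a - δ) a ∩ Ioc 0 x) - volume.real (Ioo 0 δ ∩ Ioc 0 x)) := by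
  have hint : ∀ (S : Set ℝ) (c : ℝ), MeasurableSet S →
      IntervalIntegrable (S.indicator fun _ => c) volume 0 x := fun S c hS =>
    (intervalIntegrable_iff_integrableOn_Ioc_of_le hx).2 ((integrable_const c).indicator hS)
  simp only [rampSlope]
  rw [intervalIntegral.integral_add (hint _ _ measurableSet_Ioo) (hint _ _ measurableSet_Ioo),
    intervalIntegral_indicator_const measurableSet_Ioo _ hx,
    intervalIntegral_indicator_const measurableSet_Ioo _ hx]
  ring

lemma intervalIntegral_rampSlope_of_mem_Icc (hδ : 0 < δ) {x : ℝ} (hx : x ∈ Icc δ (a - δ)) :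
    ∫ t in 0..x, rampSlope a δ t = -1 := by
  have hB : Ioo (a - δ) a ∩ Ioc 0 x = ∅ :=
    eq_empty_of_forall_notMem fun t ht => (ht.1.1.trans_le ht.2.2).not_ge hx.2
  rw [intervalIntegral_rampSlope (hδ.le.trans hx.1), hB,
    inter_eq_left.2 (Ioo_subset_Ioc_self.trans (Ioc_subset_Ioc_right hx.1)),
    Real.volume_real_Ioo_of_le hδ.le, measureReal_empty]
  field_simp
  ring

lemma intervalIntegral_rampSlope_self (hδ : 0 < δ) (h : 2 * δ ≤ a) :
    ∫ t in 0..a, rampSlope a δ t = 0 := by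
  rw [intervalIntegral_rampSlope (by linarith),
    inter_eq_left.2 (Ioo_subset_Ioc_self.trans (Ioc_subset_Ioc_left (by linarith))),
    inter_eq_left.2 (Ioo_subset_Ioc_self.trans (Ioc_subset_Ioc_right (by linarith))),
    Real.volume_real_Ioo_of_le (by linarith), Real.volume_real_Ioo_of_le hδ.le]
  ring

lemma rampSlope_sq_div_two (h : 2 * δ ≤ a) (x : ℝ) :
    rampSlope a δ x ^ 2 / 2 = (Ioo 0 δ ∪ Ioo (a - δ) a).indicator (fun _ => δ⁻¹ ^ 2 / 2) x := by
  by_cases hA : x ∈ Ioo 0 δ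
  · have hB : x ∉ Ioo (a - δ) a := fun hB => by linarith [hA.2, hB.1]
    simp [rampSlope, hA, hB]
  · by_cases hB : x ∈ Ioo (a - δ) a <;> simp [rampSlope, hA, hB]

end rampSlope

lemma cost1D_rampSlope_le {a l δ : ℝ} (hl : 0 ≤ l) (hδ : 0 < δ) (h : 2 * δ ≤ a) :
    cost1D a l (fun x => 1 + ∫ t in 0..x, rampSlope a δ t) (rampSlope a δ) ≤
      δ⁻¹ + 2 * l * δ := by
  set R := Ioo 0 δ ∪ Ioo (a - δ) a
  have hR : R ⊆ Ioo 0 a := union_subset (Ioo_subset_Ioo_right (by linarith))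
    (Ioo_subset_Ioo_left (by linarith))
  have hvol : volume.real R = 2 * δ := by
    rw [measureReal_union ((Ioc_disjoint_Ioc_of_le (by linarith)).mono Ioo_subset_Ioc_self
      Ioo_subset_Ioc_self) measurableSet_Ioo measure_Ioo_lt_top.ne measure_Ioo_lt_top.ne,
      Real.volume_real_Ioo_of_le hδ.le, Real.volume_real_Ioo_of_le (by linarith)]
    ring
  have henergy : ∫ x in Ioo 0 a, rampSlope a δ x ^ 2 / 2 = δ⁻¹ := by
    simp_rw [rampSlope_sq_div_two h]
    rw [setIntegral_indicator (measurableSet_Ioo.union measurableSet_Ioo), inter_eq_right.2 hR,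
      setIntegral_const, hvol, smul_eq_mul]
    field_simp
  have hsupport : {x | x ∈ Ioo 0 a ∧ 1 + ∫ t in 0..x, rampSlope a δ t ≠ 0} ⊆ R := by
    rintro x ⟨hx, hux⟩
    by_contra hxR
    simp only [R, mem_union, mem_Ioo, not_or, not_and, not_lt] at hxR
    have hxδ : x ≤ a - δ := le_of_not_gt fun h' => (hxR.2 h').not_gt hx.2
    rw [intervalIntegral_rampSlope_of_mem_Icc hδ ⟨hxR.1 hx.1, hxδ⟩] at hux
    norm_num at hux
  have hmeasure : volume.real _ ≤ volume.real R :=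
    measureReal_mono hsupport (measure_ne_top_of_subset hR measure_Ioo_lt_top.ne)
  calc cost1D a l _ _ ≤ δ⁻¹ + l * volume.real R := by
        rw [cost1D, henergy]
        exact add_le_add_right (mul_le_mul_of_nonneg_left hmeasure hl) _
    _ = δ⁻¹ + 2 * l * δ := by rw [hvol]; ring

lemma exists_adm1D_cost1D_le_two_sqrt {a l : ℝ} (hl : 0 < l) (h : 2 ≤ a * √(2 * l)) :
    ∃ u g, Adm1D a u g ∧ cost1D a l u g ≤ 2 * √(2 * l) := by
  have hc : 0 < √(2 * l) := Real.sqrt_pos.2 (by positivity)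
  have hδ : 2 * (√(2 * l))⁻¹ ≤ a := by
    rw [← div_eq_mul_inv, div_le_iff₀ hc]; exact h
  have ha : 0 ≤ a := (mul_nonneg zero_le_two (inv_pos.2 hc).le).trans hδ
  refine ⟨_, _, adm1D_primitive ha (memLp_rampSlope _)
    (intervalIntegral_rampSlope_self (inv_pos.2 hc) hδ),
    (cost1D_rampSlope_le hl.le (inv_pos.2 hc) hδ).trans_eq ?_⟩
  have hc2 : √(2 * l) ^ 2 = 2 * l := Real.sq_sqrt (by positivity)
  field_simp
  linarith

lemma adm1D_one (a : ℝ) : Adm1D a (fun _ => 1) 0 :=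
  ⟨continuousOn_const, MemLp.zero, fun x _ => by simp, rfl, rfl⟩

lemma cost1D_one {a : ℝ} (ha : 0 ≤ a) (l : ℝ) : cost1D a l (fun _ => 1) 0 = l * a := by
  have hsupport : {x | x ∈ Ioo 0 a ∧ (1 : ℝ) ≠ 0} = Ioo 0 a := by ext; simp
  rw [cost1D, hsupport, ← measureReal_def, Real.volume_real_Ioo_of_le ha]
  simp

lemma exists_adm1D_cost1D_le_min {a l : ℝ} (ha : 0 < a) (hl : 0 < l) :
    ∃ u g, Adm1D a u g ∧ cost1D a l u g ≤ min (l * a) (2 * √(2 * l)) := by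
  rcases le_total (l * a) (2 * √(2 * l)) with h | h
  · exact ⟨_, _, adm1D_one a, by rw [min_eq_left h, cost1D_one ha.le]⟩
  · rw [min_eq_right h]
    refine exists_adm1D_cost1D_le_two_sqrt hl ?_
    have hc : 0 < √(2 * l) := Real.sqrt_pos.2 (by positivity)
    have hc2 : √(2 * l) ^ 2 = 2 * l := Real.sq_sqrt (by positivity)
    nlinarith

/-- Explicit value of the 1D free boundary problem:
`I(a,λ) = min { λa , 2√(2λ) }`. -/
theorem stmt13 (a l : ℝ) (ha : 0 < a) (hl : 0 < l) :
    I1D a l = min (l * a) (2 * Real.sqrt (2 * l)) := by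
  refine IsLeast.csInf_eq ⟨?_, ?_⟩
  · obtain ⟨u, g, hadm, hcost⟩ := exists_adm1D_cost1D_le_min ha hl
    exact ⟨u, g, hadm, (hcost.antisymm (min_le_cost1D hl.le hadm)).symm⟩
  · rintro _ ⟨u, g, hadm, rfl⟩
    exact min_le_cost1D hl.le hadm
end

section
/- In the 1D problem, any minimizer u with |{u = 0}| > 0 of the functional ∫_0^a |u'|^2/2 + λ|{u ≠ 0}| with u(0) = u(a) = 1 satisfies: the sets E^± := {x : u'(x) = ±√(2λ)} have equal measure, |E^−| = |E^+| ≥ 1/√(2λ), and the cost of u is at least 2√(2λ). -/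
open MeasureTheory

/-!
Since `u(0) = u(a) = 1`, the derivative `g = √(2λ) (𝟙_{E⁺} - 𝟙_{E⁻})` integrates to `0` over
`(0, a)`, which balances `|E⁺|` and `|E⁻|`; over `(0, x₀)` with `u(x₀) = 0` it integrates to `-1`,
which forces `|E⁻| ≥ 1/√(2λ)`. For the cost, `u` does not vanish before its first zero `β` nor
after its last zero `γ`, and changes by `1` on each of `(0, β)` and `(γ, a)`; on such an interval
the AM-GM inequality `√(2λ) |g| ≤ g²/2 + λ`, integrated, contributes at least `√(2λ)`.
-/

open Set

section

variable {α : Type*} [MeasurableSpace α] {μ : Measure α} [IsFiniteMeasure μ] {g : α → ℝ}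

theorem integral_eq_mul_measureReal_sub_of_ae_mem {c : ℝ} (hg : AEStronglyMeasurable g μ)
    (h : ∀ᵐ s ∂μ, g s = 0 ∨ g s = c ∨ g s = -c) :
    ∫ s, g s ∂μ = c * (μ.real (g ⁻¹' {c}) - μ.real (g ⁻¹' {-c})) := by
  have hind : g =ᵐ[μ] fun s => (g ⁻¹' {c}).indicator (fun _ => c) s -
      (g ⁻¹' {-c}).indicator (fun _ => c) s := by
    filter_upwards [h] with s hs
    rcases hs with hs | hs | hs <;>
      simp only [indicator, mem_preimage, mem_singleton_iff, hs] <;> split_ifs <;> linarith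
  have hnull : ∀ v : ℝ, NullMeasurableSet (g ⁻¹' {v}) μ := fun v =>
    hg.aemeasurable.nullMeasurable (measurableSet_singleton v)
  rw [integral_congr_ae hind, integral_sub, integral_indicator₀ (hnull c),
    integral_indicator₀ (hnull (-c)), setIntegral_const, setIntegral_const, smul_eq_mul,
    smul_eq_mul, mul_sub, mul_comm c, mul_comm c]
  all_goals exact (integrable_const c).indicator₀ (hnull _)

theorem sqrt_two_mul_abs_integral_le {l : ℝ} (hg : MemLp g 2 μ) (hl : 0 ≤ l) :
    √(2 * l) * |∫ s, g s ∂μ| ≤ (∫ s, g s ^ 2 / 2 ∂μ) + l * μ.real univ := by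
  have amgm : ∀ x : ℝ, √(2 * l) * |x| ≤ x ^ 2 / 2 + l := fun x => by
    nlinarith [sq_nonneg (|x| - √(2 * l)), sq_abs x, Real.sq_sqrt (by linarith : 0 ≤ 2 * l)]
  have hsq : Integrable (fun s => g s ^ 2 / 2) μ := hg.integrable_sq.div_const 2
  calc √(2 * l) * |∫ s, g s ∂μ| ≤ √(2 * l) * ∫ s, |g s| ∂μ := by
        gcongr; exact abs_integral_le_integral_abs
    _ = ∫ s, √(2 * l) * |g s| ∂μ := (integral_const_mul _ _).symm
    _ ≤ ∫ s, (g s ^ 2 / 2 + l) ∂μ :=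
        integral_mono ((hg.integrable one_le_two).abs.const_mul _)
          (hsq.add (integrable_const l)) fun s => amgm (g s)
    _ = (∫ s, g s ^ 2 / 2 ∂μ) + l * μ.real univ := by
        rw [integral_add hsq (integrable_const l), integral_const, smul_eq_mul, mul_comm]

end

theorem exists_first_last_zero {u : ℝ → ℝ} {p q x₀ : ℝ} (hu : ContinuousOn u (Icc p q))
    (hx₀ : x₀ ∈ Icc p q) (hux₀ : u x₀ = 0) :
    ∃ β ∈ Icc p q, ∃ γ ∈ Icc p q, β ≤ γ ∧ u β = 0 ∧ u γ = 0 ∧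
      (∀ x ∈ Ioo p β, u x ≠ 0) ∧ ∀ x ∈ Ioo γ q, u x ≠ 0 := by
  set Z := Icc p q ∩ u ⁻¹' {0}
  have hZ : IsCompact Z := isCompact_Icc.of_isClosed_subset
    (hu.preimage_isClosed_of_isClosed isClosed_Icc isClosed_singleton) inter_subset_left
  have hZne : Z.Nonempty := ⟨x₀, hx₀, hux₀⟩
  obtain ⟨hβ, huβ⟩ : sInf Z ∈ Z := hZ.sInf_mem hZne
  obtain ⟨hγ, huγ⟩ : sSup Z ∈ Z := hZ.sSup_mem hZne
  refine ⟨sInf Z, hβ, sSup Z, hγ, csInf_le_csSup hZne hZ.bddBelow hZ.bddAbove, huβ, huγ, ?_, ?_⟩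
  · intro x hx hux
    exact hx.2.not_ge (csInf_le hZ.bddBelow ⟨⟨hx.1.le, hx.2.le.trans hβ.2⟩, hux⟩)
  · intro x hx hux
    exact hx.1.not_ge (le_csSup hZ.bddAbove ⟨⟨hγ.1.trans hx.1.le, hx.2.le⟩, hux⟩)

theorem two_mul_sqrt_le_cost1D_of_disjoint {a l : ℝ} {u g : ℝ → ℝ}
    (hg : MemLp g 2 (volume.restrict (Ioo 0 a))) (hl : 0 ≤ l) {S₁ S₂ : Set ℝ}
    (hS₂ : MeasurableSet S₂) (hS : Disjoint S₁ S₂)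
    (hS₁u : S₁ ⊆ {s | s ∈ Ioo 0 a ∧ u s ≠ 0}) (hS₂u : S₂ ⊆ {s | s ∈ Ioo 0 a ∧ u s ≠ 0})
    (h₁ : |∫ s in S₁, g s| = 1) (h₂ : |∫ s in S₂, g s| = 1) :
    2 * √(2 * l) ≤ cost1D a l u g := by
  have hΩ : {s | s ∈ Ioo 0 a ∧ u s ≠ 0} ⊆ Ioo 0 a := fun s hs => hs.1
  have hfin : ∀ S ⊆ Ioo 0 a, volume S ≠ ⊤ := fun S hS =>
    measure_ne_top_of_subset hS measure_Ioo_lt_top.ne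
  have hsq : IntegrableOn (fun s => g s ^ 2 / 2) (Ioo 0 a) := hg.integrable_sq.div_const 2
  have piece : ∀ S ⊆ Ioo 0 a, |∫ s in S, g s| = 1 →
      √(2 * l) ≤ (∫ s in S, g s ^ 2 / 2) + l * volume.real S := by
    intro S hS h
    have : IsFiniteMeasure (volume.restrict S) := isFiniteMeasure_restrict.2 (hfin S hS)
    simpa [h] using
      sqrt_two_mul_abs_integral_le (hg.mono_measure (Measure.restrict_mono hS le_rfl)) hl
  have hS₁a := hS₁u.trans hΩ
  have hS₂a := hS₂u.trans hΩ
  have hint : (∫ s in S₁, g s ^ 2 / 2) + (∫ s in S₂, g s ^ 2 / 2) ≤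
      ∫ s in Ioo 0 a, g s ^ 2 / 2 := by
    rw [← setIntegral_union hS hS₂ (hsq.mono_set hS₁a) (hsq.mono_set hS₂a)]
    exact setIntegral_mono_set hsq (Filter.Eventually.of_forall fun s => by positivity)
      (union_subset hS₁a hS₂a).eventuallyLE
  have hvol : volume.real S₁ + volume.real S₂ ≤
      volume.real {s | s ∈ Ioo 0 a ∧ u s ≠ 0} := by
    rw [← measureReal_union hS hS₂ (hfin S₁ hS₁a) (hfin S₂ hS₂a)]
    exact measureReal_mono (union_subset hS₁u hS₂u) (hfin _ hΩ)
  have := piece S₁ hS₁a h₁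
  have := piece S₂ hS₂a h₂
  rw [cost1D, ← measureReal_def]
  nlinarith [mul_le_mul_of_nonneg_left hvol hl]

namespace Adm1D

variable {a : ℝ} {u g : ℝ → ℝ}

theorem setIntegral_Ioo_eq_sub_s15 (hadm : Adm1D a u g) {x y : ℝ} (hx : 0 ≤ x) (hxy : x ≤ y)
    (hy : y ≤ a) : ∫ s in Ioo x y, g s = u y - u x := by
  obtain ⟨-, hg, hrep, -, -⟩ := hadm
  have hint : ∀ z ∈ Icc 0 a, IntervalIntegrable g volume 0 z := fun z hz => by
    rw [intervalIntegrable_iff_integrableOn_Ioo_of_le hz.1]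
    exact IntegrableOn.mono_set (hg.integrable one_le_two) (Ioo_subset_Ioo_right hz.2)
  rw [← integral_Ioc_eq_integral_Ioo, ← intervalIntegral.integral_of_le hxy,
    ← intervalIntegral.integral_interval_sub_left (hint y ⟨hx.trans hxy, hy⟩)
      (hint x ⟨hx, hxy.trans hy⟩), hrep y ⟨hx.trans hxy, hy⟩, hrep x ⟨hx, hxy.trans hy⟩]
  ring

theorem sub_one_eq_mul_measureReal_sub (hadm : Adm1D a u g) {c : ℝ}
    (hEL : ∀ᵐ s ∂(volume.restrict (Ioo 0 a)), g s = 0 ∨ g s = c ∨ g s = -c)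
    {x : ℝ} (hx : x ∈ Icc 0 a) :
    u x - 1 = c * (volume.real {s | s ∈ Ioo 0 x ∧ g s = c} -
      volume.real {s | s ∈ Ioo 0 x ∧ g s = -c}) := by
  have ⟨_, hg, _, hu0, _⟩ := hadm
  have hsub : Ioo 0 x ⊆ Ioo 0 a := Ioo_subset_Ioo_right hx.2
  rw [← hu0, ← hadm.setIntegral_Ioo_eq_sub_s15 le_rfl hx.1 hx.2,
    integral_eq_mul_measureReal_sub_of_ae_mem (hg.1.mono_set hsub)
      (ae_restrict_of_ae_restrict_of_subset hsub hEL),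
    measureReal_restrict_apply' measurableSet_Ioo, measureReal_restrict_apply' measurableSet_Ioo,
    inter_comm, inter_comm _ (Ioo 0 x)]
  rfl

theorem two_mul_sqrt_le_cost1D (hadm : Adm1D a u g) {l : ℝ} (hl : 0 ≤ l) {x₀ : ℝ}
    (hx₀ : x₀ ∈ Icc 0 a) (hux₀ : u x₀ = 0) : 2 * √(2 * l) ≤ cost1D a l u g := by
  have ⟨hu, hg, _, hu0, hua⟩ := hadm
  obtain ⟨β, hβ, γ, hγ, hβγ, huβ, huγ, hne₁, hne₂⟩ := exists_first_last_zero hu hx₀ hux₀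
  refine two_mul_sqrt_le_cost1D_of_disjoint hg hl measurableSet_Ioo
    (Ioo_disjoint_Ioo.2 (by simp [hβγ])) (fun x hx => ⟨⟨hx.1, hx.2.trans_le hβ.2⟩, hne₁ x hx⟩)
    (fun x hx => ⟨⟨hγ.1.trans_lt hx.1, hx.2⟩, hne₂ x hx⟩) ?_ ?_
  · rw [hadm.setIntegral_Ioo_eq_sub_s15 le_rfl hβ.1 hβ.2, huβ, hu0]
    norm_num
  · rw [hadm.setIntegral_Ioo_eq_sub_s15 hγ.1 hγ.2 le_rfl, huγ, hua]
    norm_num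

end Adm1D

theorem stmt15_general (a l : ℝ) (hl : 0 < l) (u g : ℝ → ℝ)
    (hadm : Adm1D a u g)
    (hzero : 0 < volume {s | s ∈ Set.Ioo 0 a ∧ u s = 0})
    (hEL : ∀ᵐ s ∂(volume.restrict (Set.Ioo 0 a)),
      g s = 0 ∨ g s = Real.sqrt (2 * l) ∨ g s = -Real.sqrt (2 * l)) :
    volume {s | s ∈ Set.Ioo 0 a ∧ g s = -Real.sqrt (2 * l)} =
      volume {s | s ∈ Set.Ioo 0 a ∧ g s = Real.sqrt (2 * l)} ∧
    ENNReal.ofReal (1 / Real.sqrt (2 * l)) ≤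
      volume {s | s ∈ Set.Ioo 0 a ∧ g s = -Real.sqrt (2 * l)} ∧
    2 * Real.sqrt (2 * l) ≤ cost1D a l u g := by
  obtain ⟨x₀, hx₀, hux₀⟩ := nonempty_of_measure_ne_zero hzero.ne'
  have hx₀' : x₀ ∈ Icc 0 a := Ioo_subset_Icc_self hx₀
  set c := √(2 * l)
  have hc : 0 < c := by positivity
  have hfin : ∀ x ≤ a, ∀ v : ℝ, volume {s | s ∈ Ioo 0 x ∧ g s = v} ≠ ⊤ := fun x hx v =>
    measure_ne_top_of_subset (fun s hs => Ioo_subset_Ioo_right hx hs.1) measure_Ioo_lt_top.ne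
  have hbalance :=
    hadm.sub_one_eq_mul_measureReal_sub hEL (right_mem_Icc.2 (hx₀.1.trans hx₀.2).le)
  have hdrop := hadm.sub_one_eq_mul_measureReal_sub hEL hx₀'
  rw [hadm.2.2.2.2, sub_self, eq_comm, mul_eq_zero, sub_eq_zero] at hbalance
  rw [hux₀] at hdrop
  refine ⟨?_, ?_, hadm.two_mul_sqrt_le_cost1D hl.le hx₀' hux₀⟩
  · rw [← ENNReal.toReal_eq_toReal_iff' (hfin a le_rfl _) (hfin a le_rfl _)]
    exact (hbalance.resolve_left hc.ne').symm
  · have h : 1 / c ≤ volume.real {s | s ∈ Ioo 0 x₀ ∧ g s = -c} := by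
      rw [div_le_iff₀ hc]
      nlinarith [measureReal_nonneg (μ := volume) (s := {s | s ∈ Ioo 0 x₀ ∧ g s = c})]
    refine ENNReal.ofReal_le_of_le_toReal (h.trans (measureReal_mono ?_ (hfin a le_rfl _)))
    exact fun s hs => ⟨Ioo_subset_Ioo_right hx₀'.2 hs.1, hs.2⟩

/-- If `u` is admissible, nonnegative, vanishes on a set of positive measure,
and satisfies the integrated Euler–Lagrange condition `u' ∈ {0, ±√(2λ)}` a.e.,
then the sets `E^± = {u' = ±√(2λ)}` have equal measure, this common measure is
at least `1/√(2λ)`, and the cost is at least `2√(2λ)`. -/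
theorem stmt15 (a l : ℝ) (ha : 0 < a) (hl : 0 < l) (u g : ℝ → ℝ)
    (hadm : Adm1D a u g)
    (hpos : ∀ x ∈ Set.Icc 0 a, 0 ≤ u x)
    (hzero : 0 < volume {s | s ∈ Set.Ioo 0 a ∧ u s = 0})
    (hEL : ∀ᵐ s ∂(volume.restrict (Set.Ioo 0 a)),
      g s = 0 ∨ g s = Real.sqrt (2 * l) ∨ g s = -Real.sqrt (2 * l)) :
    volume {s | s ∈ Set.Ioo 0 a ∧ g s = -Real.sqrt (2 * l)} =
      volume {s | s ∈ Set.Ioo 0 a ∧ g s = Real.sqrt (2 * l)} ∧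
    ENNReal.ofReal (1 / Real.sqrt (2 * l)) ≤
      volume {s | s ∈ Set.Ioo 0 a ∧ g s = -Real.sqrt (2 * l)} ∧
    2 * Real.sqrt (2 * l) ≤ cost1D a l u g :=
  stmt15_general a l hl u g hadm hzero hEL
end
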